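/- Let μ, ν be probability measures on ℝ with finite second moments, ρ a reference probability measure on ℝ without atoms among its pushforward, and let μ̂ = F_μ^{[-1]} ∘ F_ρ denote the cumulative distribution transform. Then ‖μ̂ − ν̂‖_{L²(ρ)} equals the Wasserstein-2 distance W₂(μ, ν). -/

import Mathlib

open MeasureTheory
open scoped ENNReal

noncomputable section

/-- The cumulative distribution function `F_μ(t) = μ((−∞,t])` of a measure on `ℝ`. -/
noncomputable def cdf (ν : Measure ℝ) (t : ℝ) : ℝ := (ν (Set.Iic t)).toReal

/-- The quantile function (generalized inverse) `F_μ^{[-1]}(t) = inf {s | F_μ(s) > t}`. -/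
noncomputable def quantile (ν : Measure ℝ) (t : ℝ) : ℝ := sInf {s : ℝ | t < cdf ν s}

/-- The cumulative distribution transform `μ̂ = F_μ^{[-1]} ∘ F_ρ` with respect to a reference
measure `ρ`. -/
noncomputable def cdt (ν ρ : Measure ℝ) (t : ℝ) : ℝ := quantile ν (cdf ρ t)

/-- The squared Wasserstein-2 cost between `μ` and `ν`: the infimal quadratic transport cost
over all couplings of `μ` and `ν`. -/
noncomputable def W2sq (μ ν : Measure ℝ) : ℝ≥0∞ :=
  sInf {c : ℝ≥0∞ | ∃ π : Measure (ℝ × ℝ), π.map Prod.fst = μ ∧ π.map Prod.snd = ν ∧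
    c = ∫⁻ p : ℝ × ℝ, ENNReal.ofReal ((p.1 - p.2) ^ 2) ∂π}

/-
Since `ρ` has no atoms, `F_ρ` pushes `ρ` forward to the uniform distribution `𝕌` on `(0, 1)`,
so `‖μ̂ - ν̂‖_{L²(ρ)}` is the quadratic cost of the quantile coupling, the law of
`(F_μ^{[-1]}(U), F_ν^{[-1]}(U))` for `U ~ 𝕌`, whose marginals are `μ` and `ν`. This coupling
is optimal: among couplings with the same square-integrable marginals the cost depends only
on `-2 ∫ x y dπ`; Hoeffding's identity writes `∫ x y dπ` as the integral over `(s, t)` of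
`π([s, ∞) × [t, ∞))` plus terms depending only on the marginals, and the quantile coupling
attains the Fréchet bound `π([s, ∞) × [t, ∞)) ≤ min (μ [s, ∞)) (ν [t, ∞))`.
-/
open Set Filter Topology

local notation "𝕌" => Measure.restrict (volume : Measure ℝ) (Ioo (0 : ℝ) 1)

lemma cdf_eq_probabilityTheory_cdf (ν : Measure ℝ) [IsProbabilityMeasure ν] :
    cdf ν = ProbabilityTheory.cdf ν :=
  funext fun t => (ProbabilityTheory.cdf_eq_real ν t).symm

section CDF

variable (ν : Measure ℝ) [IsProbabilityMeasure ν]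

lemma monotone_cdf : Monotone (cdf ν) := by
  rw [cdf_eq_probabilityTheory_cdf]; exact ProbabilityTheory.monotone_cdf ν

lemma cdf_le_one (t : ℝ) : cdf ν t ≤ 1 := by
  rw [cdf_eq_probabilityTheory_cdf]; exact ProbabilityTheory.cdf_le_one ν t

lemma ofReal_cdf (t : ℝ) : ENNReal.ofReal (cdf ν t) = ν (Iic t) :=
  ENNReal.ofReal_toReal (measure_ne_top ν _)

lemma tendsto_cdf_atBot : Tendsto (cdf ν) atBot (𝓝 0) := by
  rw [cdf_eq_probabilityTheory_cdf]; exact ProbabilityTheory.tendsto_cdf_atBot ν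

lemma tendsto_cdf_atTop : Tendsto (cdf ν) atTop (𝓝 1) := by
  rw [cdf_eq_probabilityTheory_cdf]; exact ProbabilityTheory.tendsto_cdf_atTop ν

lemma tendsto_cdf_nhdsGT (t : ℝ) : Tendsto (cdf ν) (𝓝[>] t) (𝓝 (cdf ν t)) := by
  rw [cdf_eq_probabilityTheory_cdf]
  exact (((ProbabilityTheory.cdf ν).right_continuous t).mono Ioi_subset_Ici_self).tendsto

lemma continuous_cdf [NullSingletonClass ν] : Continuous (cdf ν) := by
  rw [cdf_eq_probabilityTheory_cdf, continuous_iff_continuousAt]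
  intro a
  set F := ProbabilityTheory.cdf ν
  have hleft : Function.leftLim F a = F a := by
    have h := F.measure_singleton a
    rw [ProbabilityTheory.measure_cdf, measure_singleton, eq_comm, ENNReal.ofReal_eq_zero,
      sub_nonpos] at h
    exact le_antisymm (F.mono.leftLim_le le_rfl) h
  rw [F.mono.continuousAt_iff_leftLim_eq_rightLim, hleft, (F.right_continuous a).rightLim_eq]

end CDF

lemma volume_restrict_Ioo_Iio {c : ℝ} (hc : c ≤ 1) : 𝕌 (Iio c) = ENNReal.ofReal c := by
  rw [Measure.restrict_apply measurableSet_Iio, Iio_inter_Ioo, min_eq_left hc, Real.volume_Ioo,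
    sub_zero]

lemma volume_restrict_Ioo_Iic {c : ℝ} (hc : c ≤ 1) : 𝕌 (Iic c) = ENNReal.ofReal c := by
  rw [← measure_congr Iio_ae_eq_Iic, volume_restrict_Ioo_Iio hc]

section Reference

variable (ρ : Measure ℝ) [IsProbabilityMeasure ρ] [NullSingletonClass ρ]

lemma measure_cdf_le {c : ℝ} (hc : c < 1) : ρ {t | cdf ρ t ≤ c} = ENNReal.ofReal c := by
  set S := {t | cdf ρ t ≤ c}
  rcases S.eq_empty_or_nonempty with hS | hS
  · have hc0 : c ≤ 0 := ge_of_tendsto (tendsto_cdf_atBot ρ) <| Eventually.of_forall fun t =>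
      le_of_not_ge fun h => eq_empty_iff_forall_notMem.1 hS t h
    rw [hS, measure_empty, ENNReal.ofReal_of_nonpos hc0]
  have hbdd : BddAbove S := by
    obtain ⟨b, hb⟩ :=
      eventually_atTop.1 ((tendsto_cdf_atTop ρ).eventually (eventually_gt_nhds hc))
    exact ⟨b, fun t ht => not_lt.1 fun hbt => (hb t hbt.le).not_ge ht⟩
  set a := sSup S
  have haS : cdf ρ a ≤ c := (isClosed_le (continuous_cdf ρ) continuous_const).csSup_mem hS hbdd
  have hSa : S = Iic a :=
    Subset.antisymm (fun t ht => le_csSup hbdd ht) fun t ht => (monotone_cdf ρ ht).trans haS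
  have hca : c ≤ cdf ρ a := by
    refine ge_of_tendsto ((continuous_cdf ρ).continuousAt.tendsto.mono_left nhdsWithin_le_nhds)
      (eventually_nhdsWithin_of_forall (s := Ioi a) fun t ht => ?_)
    exact (not_le.1 fun h => ht.not_ge (le_csSup hbdd h)).le
  rw [hSa, ← ofReal_cdf, le_antisymm haS hca]

theorem map_cdf : ρ.map (cdf ρ) = 𝕌 := by
  refine Measure.ext_of_Iic _ _ fun c => ?_
  rw [Measure.map_apply (monotone_cdf ρ).measurable measurableSet_Iic]
  rcases lt_or_ge c 1 with hc | hc
  · exact (measure_cdf_le ρ hc).trans (volume_restrict_Ioo_Iic hc.le).symm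
  · rw [Measure.restrict_apply_superset (t := Iic c) fun u hu => hu.2.le.trans hc,
      Real.volume_Ioo, sub_zero, ENNReal.ofReal_one,
      eq_univ_of_forall (s := cdf ρ ⁻¹' Iic c) fun t => (cdf_le_one ρ t).trans hc]
    exact measure_univ

end Reference

section Quantile

variable (μ : Measure ℝ) [IsProbabilityMeasure μ] {u x : ℝ}

lemma bddBelow_setOf_lt_cdf (hu : 0 < u) : BddBelow {s | u < cdf μ s} := by
  obtain ⟨b, hb⟩ :=
    eventually_atBot.1 ((tendsto_cdf_atBot μ).eventually (eventually_lt_nhds hu))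
  exact ⟨b, fun s hs => le_of_not_ge fun hsb => (hb s hsb).not_gt hs⟩

lemma nonempty_setOf_lt_cdf (hu : u < 1) : {s | u < cdf μ s}.Nonempty :=
  ((tendsto_cdf_atTop μ).eventually (eventually_gt_nhds hu)).exists

lemma quantile_le_of_lt_cdf (hu : 0 < u) (h : u < cdf μ x) : quantile μ u ≤ x :=
  csInf_le (bddBelow_setOf_lt_cdf μ hu) h

lemma le_cdf_of_quantile_le (hu : u < 1) (h : quantile μ u ≤ x) : u ≤ cdf μ x := by
  refine ge_of_tendsto (tendsto_cdf_nhdsGT μ x)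
    (eventually_nhdsWithin_of_forall (s := Ioi x) fun y hy => ?_)
  obtain ⟨s, hs, hsy⟩ := exists_lt_of_csInf_lt (nonempty_setOf_lt_cdf μ hu) (h.trans_lt hy)
  exact hs.le.trans (monotone_cdf μ hsy.le)

-- For `u ≤ 0` the set defining `quantile μ u` may be unbounded below and for `u ≥ 1` it is empty,
-- so `sInf` returns the junk value `0`: `quantile μ` is only monotone on `(0, 1)`.
lemma monotoneOn_quantile : MonotoneOn (quantile μ) (Ioo 0 1) := fun _ hp _ hq hpq =>
  csInf_le_csInf (bddBelow_setOf_lt_cdf μ hp.1) (nonempty_setOf_lt_cdf μ hq.2)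
    fun _ hs => hpq.trans_lt hs

lemma aemeasurable_quantile : AEMeasurable (quantile μ) 𝕌 :=
  aemeasurable_restrict_of_monotoneOn measurableSet_Ioo (monotoneOn_quantile μ)

theorem map_quantile : Measure.map (quantile μ) 𝕌 = μ := by
  refine (Measure.ext_of_Iic _ _ fun x => ?_).symm
  rw [Measure.map_apply_of_aemeasurable (aemeasurable_quantile μ) measurableSet_Iic]
  have hlow : Iio (cdf μ x) ≤ᵐ[𝕌] quantile μ ⁻¹' Iic x := by
    filter_upwards [ae_restrict_mem measurableSet_Ioo] with u hu h
    exact quantile_le_of_lt_cdf μ hu.1 h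
  have hup : quantile μ ⁻¹' Iic x ≤ᵐ[𝕌] Iic (cdf μ x) := by
    filter_upwards [ae_restrict_mem measurableSet_Ioo] with u hu h
    exact le_cdf_of_quantile_le μ hu.2 h
  have h_Iio := measure_mono_ae hlow
  have h_Iic := measure_mono_ae hup
  rw [volume_restrict_Ioo_Iio (cdf_le_one μ x), ofReal_cdf] at h_Iio
  rw [volume_restrict_Ioo_Iic (cdf_le_one μ x), ofReal_cdf] at h_Iic
  exact le_antisymm h_Iio h_Iic

end Quantile

lemma restrict_preimage_Ici_inter_eq_min {m : Measure ℝ} {M : Set ℝ} (hM : MeasurableSet M)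
    {f g : ℝ → ℝ} (hf : MonotoneOn f M) (hg : MonotoneOn g M) (s t : ℝ) :
    m.restrict M (f ⁻¹' Ici s ∩ g ⁻¹' Ici t) =
      min (m.restrict M (f ⁻¹' Ici s)) (m.restrict M (g ⁻¹' Ici t)) := by
  simp only [Measure.restrict_apply' hM]
  set A := f ⁻¹' Ici s ∩ M
  set B := g ⁻¹' Ici t ∩ M
  have hAB : A ∩ B = f ⁻¹' Ici s ∩ g ⁻¹' Ici t ∩ M := by
    ext; simp only [A, B, mem_inter_iff]; tauto
  have hnested : A ⊆ B ∨ B ⊆ A := by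
    by_contra! h
    obtain ⟨a, ⟨ha, haM⟩, haB⟩ := not_subset.1 h.1
    obtain ⟨b, ⟨hb, hbM⟩, hbA⟩ := not_subset.1 h.2
    rcases le_total a b with hab | hba
    · exact hbA ⟨mem_Ici.2 (le_trans ha (hf haM hbM hab)), hbM⟩
    · exact haB ⟨mem_Ici.2 (le_trans hb (hg hbM haM hba)), haM⟩
  rw [← hAB]
  rcases hnested with h | h
  · rw [inter_eq_left.2 h, min_eq_left (measure_mono h)]
  · rw [inter_eq_right.2 h, min_eq_right (measure_mono h)]

def quantileCoupling (μ ν : Measure ℝ) : Measure (ℝ × ℝ) :=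
  Measure.map (fun u => (quantile μ u, quantile ν u)) 𝕌

section QuantileCoupling

variable (μ ν : Measure ℝ) [IsProbabilityMeasure μ] [IsProbabilityMeasure ν]

lemma aemeasurable_quantile_prod : AEMeasurable (fun u => (quantile μ u, quantile ν u)) 𝕌 :=
  (aemeasurable_quantile μ).prodMk (aemeasurable_quantile ν)

lemma quantileCoupling_map_fst : (quantileCoupling μ ν).map Prod.fst = μ := by
  rw [quantileCoupling, AEMeasurable.map_map_of_aemeasurable measurable_fst.aemeasurable
    (aemeasurable_quantile_prod μ ν)]
  exact map_quantile μ

lemma quantileCoupling_map_snd : (quantileCoupling μ ν).map Prod.snd = ν := by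
  rw [quantileCoupling, AEMeasurable.map_map_of_aemeasurable measurable_snd.aemeasurable
    (aemeasurable_quantile_prod μ ν)]
  exact map_quantile ν

lemma quantileCoupling_Ici_prod_Ici (s t : ℝ) :
    quantileCoupling μ ν (Ici s ×ˢ Ici t) = min (μ (Ici s)) (ν (Ici t)) := by
  rw [quantileCoupling, Measure.map_apply_of_aemeasurable (aemeasurable_quantile_prod μ ν)
      (measurableSet_Ici.prod measurableSet_Ici), mk_preimage_prod,
    restrict_preimage_Ici_inter_eq_min measurableSet_Ioo (monotoneOn_quantile μ)
      (monotoneOn_quantile ν), ← Measure.map_apply_of_aemeasurable (aemeasurable_quantile μ)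
      measurableSet_Ici, ← Measure.map_apply_of_aemeasurable (aemeasurable_quantile ν)
      measurableSet_Ici, map_quantile, map_quantile]

end QuantileCoupling

/-- Layer-cake decomposition of a signed real: `x = ∫ s, layer x s`, hence
`x * y = ∫ (s, t), layer x s * layer y t`. -/
def layer (x s : ℝ) : ℝ := (if s ≤ x then 1 else 0) - if s ≤ 0 then 1 else 0

section Layer

variable {x : ℝ}

lemma layer_of_nonneg (hx : 0 ≤ x) : layer x = (Ioc 0 x).indicator 1 := by
  ext s
  simp only [layer, indicator_apply, mem_Ioc, Pi.one_apply]
  split_ifs <;> grind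

lemma layer_of_nonpos (hx : x ≤ 0) : layer x = -(Ioc x 0).indicator 1 := by
  ext s
  simp only [layer, indicator_apply, mem_Ioc, Pi.one_apply, Pi.neg_apply]
  split_ifs <;> grind

lemma integrable_layer (x : ℝ) : Integrable (layer x) := by
  have h (a b : ℝ) : Integrable ((Ioc a b).indicator (1 : ℝ → ℝ)) :=
    (integrable_indicator_iff measurableSet_Ioc).2 (integrableOn_const measure_Ioc_lt_top.ne)
  rcases le_total 0 x with hx | hx
  · rw [layer_of_nonneg hx]; exact h 0 x
  · rw [layer_of_nonpos hx]; exact (h x 0).neg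

lemma integral_layer (x : ℝ) : ∫ s, layer x s = x := by
  rcases le_total 0 x with hx | hx
  · rw [layer_of_nonneg hx, integral_indicator_one measurableSet_Ioc,
      Real.volume_real_Ioc_of_le hx, sub_zero]
  · simp only [layer_of_nonpos hx, Pi.neg_apply, integral_neg,
      integral_indicator_one measurableSet_Ioc, Real.volume_real_Ioc_of_le hx, zero_sub, neg_neg]

lemma integral_norm_layer (x : ℝ) : ∫ s, ‖layer x s‖ = |x| := by
  rcases le_total 0 x with hx | hx
  · simp [layer_of_nonneg hx, norm_indicator_eq_indicator_norm,
      Real.volume_real_Ioc_of_le hx, abs_of_nonneg hx]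
  · simp [layer_of_nonpos hx, norm_indicator_eq_indicator_norm,
      Real.volume_real_Ioc_of_le hx, abs_of_nonpos hx]

lemma measurable_layer : Measurable (Function.uncurry layer) :=
  (Measurable.ite (measurableSet_le measurable_snd measurable_fst) measurable_const
    measurable_const).sub
    (Measurable.ite (measurableSet_le measurable_snd measurable_const) measurable_const
      measurable_const)

end Layer

section Hoeffding

variable {π : Measure (ℝ × ℝ)}

lemma integral_layer_mul_layer [IsProbabilityMeasure π] (s t : ℝ) :
    ∫ p, layer p.1 s * layer p.2 t ∂π =
      π.real (Ici s ×ˢ Ici t) - (if t ≤ 0 then 1 else 0) * (π.map Prod.fst).real (Ici s)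
        - (if s ≤ 0 then 1 else 0) * (π.map Prod.snd).real (Ici t)
        + (if s ≤ 0 then 1 else 0) * (if t ≤ 0 then 1 else 0) := by
  set a : ℝ := if s ≤ 0 then 1 else 0
  set b : ℝ := if t ≤ 0 then 1 else 0
  have hE : MeasurableSet (Ici s ×ˢ Ici t) := measurableSet_Ici.prod measurableSet_Ici
  have hA : MeasurableSet (Prod.fst ⁻¹' Ici s : Set (ℝ × ℝ)) :=
    measurable_fst measurableSet_Ici
  have hB : MeasurableSet (Prod.snd ⁻¹' Ici t : Set (ℝ × ℝ)) :=
    measurable_snd measurableSet_Ici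
  have hexpand : (fun p : ℝ × ℝ => layer p.1 s * layer p.2 t) = fun p =>
      (Ici s ×ˢ Ici t).indicator 1 p - b * (Prod.fst ⁻¹' Ici s).indicator 1 p
        - a * (Prod.snd ⁻¹' Ici t).indicator 1 p + a * b := by
    ext ⟨x, y⟩
    simp only [layer, a, b, indicator, mem_prod, mem_preimage, mem_Ici, Pi.one_apply]
    split_ifs <;> grind
  have hint {S : Set (ℝ × ℝ)} (hS : MeasurableSet S) : Integrable (S.indicator 1) π :=
    (integrable_const (1 : ℝ)).indicator hS
  have hA' := (hint hA).const_mul b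
  have hB' := (hint hB).const_mul a
  rw [hexpand, integral_add ?_ (integrable_const _), integral_sub ?_ hB',
    integral_sub (hint hE) hA', integral_const_mul, integral_const_mul,
    integral_indicator_one hE, integral_indicator_one hA,
    integral_indicator_one hB, integral_const, probReal_univ, one_smul,
    map_measureReal_apply measurable_fst measurableSet_Ici,
    map_measureReal_apply measurable_snd measurableSet_Ici]
  exacts [(hint hE).sub hA', (hint hE).sub hA' |>.sub hB']

variable (hπ : Integrable (fun p : ℝ × ℝ => p.1 * p.2) π)
include hπ

lemma integrable_layer_mul_layer :
    Integrable (fun q : (ℝ × ℝ) × (ℝ × ℝ) => layer q.1.1 q.2.1 * layer q.1.2 q.2.2)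
      (π.prod volume) := by
  have hmeas :
      Measurable fun q : (ℝ × ℝ) × (ℝ × ℝ) => layer q.1.1 q.2.1 * layer q.1.2 q.2.2 :=
    (measurable_layer.comp (measurable_fst.fst.prodMk measurable_snd.fst)).mul
      (measurable_layer.comp (measurable_fst.snd.prodMk measurable_snd.snd))
  refine (integrable_prod_iff hmeas.aestronglyMeasurable).2
    ⟨Eventually.of_forall fun p => ?_, hπ.norm.congr (Eventually.of_forall fun p => ?_)⟩
  · rw [Measure.volume_eq_prod]
    exact (integrable_layer p.1).mul_prod (integrable_layer p.2)
  · simp only [norm_mul]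
    rw [Measure.volume_eq_prod,
      integral_prod_mul (fun s => ‖layer p.1 s‖) fun t => ‖layer p.2 t‖, integral_norm_layer,
      integral_norm_layer, Real.norm_eq_abs, Real.norm_eq_abs]

/-- Hoeffding's representation of `∫ x y dπ` through the joint upper tails of `π`. -/
lemma integral_mul_eq_integral_layer_mul_layer [SFinite π] :
    ∫ p, p.1 * p.2 ∂π = ∫ z : ℝ × ℝ, ∫ p, layer p.1 z.1 * layer p.2 z.2 ∂π := by
  rw [← integral_integral_swap (integrable_layer_mul_layer hπ)]
  refine integral_congr_ae (Eventually.of_forall fun p => ?_)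
  dsimp only
  rw [Measure.volume_eq_prod, integral_prod_mul (fun s => layer p.1 s) fun t => layer p.2 t,
    integral_layer, integral_layer]

end Hoeffding

theorem integral_mul_le_of_measure_Ici_prod_Ici_le {π π' : Measure (ℝ × ℝ)}
    [IsProbabilityMeasure π] [IsProbabilityMeasure π']
    (hπ : Integrable (fun p : ℝ × ℝ => p.1 * p.2) π)
    (hπ' : Integrable (fun p : ℝ × ℝ => p.1 * p.2) π')
    (hfst : π.map Prod.fst = π'.map Prod.fst) (hsnd : π.map Prod.snd = π'.map Prod.snd)
    (hle : ∀ s t, π (Ici s ×ˢ Ici t) ≤ π' (Ici s ×ˢ Ici t)) :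
    ∫ p, p.1 * p.2 ∂π ≤ ∫ p, p.1 * p.2 ∂π' := by
  rw [integral_mul_eq_integral_layer_mul_layer hπ, integral_mul_eq_integral_layer_mul_layer hπ']
  refine integral_mono (integrable_layer_mul_layer hπ).integral_prod_right
    (integrable_layer_mul_layer hπ').integral_prod_right fun z => ?_
  simp only [integral_layer_mul_layer, hfst, hsnd]
  gcongr
  exact ENNReal.toReal_mono (measure_ne_top _ _) (hle z.1 z.2)

lemma measure_prod_le_min_map (π : Measure (ℝ × ℝ)) {A B : Set ℝ} (hA : MeasurableSet A)
    (hB : MeasurableSet B) : π (A ×ˢ B) ≤ min (π.map Prod.fst A) (π.map Prod.snd B) := by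
  rw [Measure.map_apply measurable_fst hA, Measure.map_apply measurable_snd hB]
  exact le_min (measure_mono fun p hp => hp.1) (measure_mono fun p hp => hp.2)

lemma isProbabilityMeasure_of_map_fst {μ : Measure ℝ} [IsProbabilityMeasure μ]
    {π : Measure (ℝ × ℝ)} (hfst : π.map Prod.fst = μ) : IsProbabilityMeasure π :=
  have : IsProbabilityMeasure (π.map Prod.fst) := hfst ▸ ‹_›
  Measure.isProbabilityMeasure_of_map Prod.fst

section Coupling

variable {μ ν : Measure ℝ} {π : Measure (ℝ × ℝ)}
  (hfst : π.map Prod.fst = μ) (hsnd : π.map Prod.snd = ν)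
  (hμ : MemLp (id : ℝ → ℝ) 2 μ) (hν : MemLp (id : ℝ → ℝ) 2 ν)

include hfst hμ in
lemma memLp_fst_of_map_fst : MemLp Prod.fst 2 π :=
  (hfst ▸ hμ).comp_of_map measurable_fst.aemeasurable

include hsnd hν in
lemma memLp_snd_of_map_snd : MemLp Prod.snd 2 π :=
  (hsnd ▸ hν).comp_of_map measurable_snd.aemeasurable

include hfst hsnd hμ hν

lemma integrable_mul_of_map : Integrable (fun p : ℝ × ℝ => p.1 * p.2) π :=
  (memLp_fst_of_map_fst hfst hμ).integrable_mul (memLp_snd_of_map_snd hsnd hν)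

lemma lintegral_sq_sub_eq_of_map :
    ∫⁻ p, ENNReal.ofReal ((p.1 - p.2) ^ 2) ∂π =
      ENNReal.ofReal (∫ x, x ^ 2 ∂μ + ∫ y, y ^ 2 ∂ν - 2 * ∫ p, p.1 * p.2 ∂π) := by
  have h1 := (memLp_fst_of_map_fst hfst hμ).integrable_sq
  have h2 := (memLp_snd_of_map_snd hsnd hν).integrable_sq
  have h12 := (integrable_mul_of_map hfst hsnd hμ hν).const_mul 2
  have hsq : Integrable (fun p : ℝ × ℝ => (p.1 - p.2) ^ 2) π :=
    ((memLp_fst_of_map_fst hfst hμ).sub (memLp_snd_of_map_snd hsnd hν)).integrable_sq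
  rw [← ofReal_integral_eq_lintegral_ofReal hsq (Eventually.of_forall fun p => sq_nonneg _)]
  have hexpand : (fun p : ℝ × ℝ => (p.1 - p.2) ^ 2) =
      fun p => p.1 ^ 2 + p.2 ^ 2 - 2 * (p.1 * p.2) := by
    ext; ring
  rw [hexpand, integral_sub ?_ h12, integral_add h1 h2, integral_const_mul, ← hfst,
    ← hsnd, integral_map measurable_fst.aemeasurable (by fun_prop),
    integral_map measurable_snd.aemeasurable (by fun_prop)]
  exact h1.add h2

end Coupling

theorem W2sq_eq_lintegral_quantileCoupling (μ ν : Measure ℝ) [IsProbabilityMeasure μ]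
    [IsProbabilityMeasure ν] (hμ : MemLp (id : ℝ → ℝ) 2 μ)
    (hν : MemLp (id : ℝ → ℝ) 2 ν) :
    W2sq μ ν = ∫⁻ p, ENNReal.ofReal ((p.1 - p.2) ^ 2) ∂quantileCoupling μ ν := by
  have hfst₀ := quantileCoupling_map_fst μ ν
  have hsnd₀ := quantileCoupling_map_snd μ ν
  have := isProbabilityMeasure_of_map_fst hfst₀
  refine le_antisymm (sInf_le ⟨_, hfst₀, hsnd₀, rfl⟩) (le_sInf ?_)
  rintro _ ⟨π, hfst, hsnd, rfl⟩
  have := isProbabilityMeasure_of_map_fst hfst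
  have hcross : ∫ p, p.1 * p.2 ∂π ≤ ∫ p, p.1 * p.2 ∂quantileCoupling μ ν :=
    integral_mul_le_of_measure_Ici_prod_Ici_le (integrable_mul_of_map hfst hsnd hμ hν)
      (integrable_mul_of_map hfst₀ hsnd₀ hμ hν) (hfst.trans hfst₀.symm)
      (hsnd.trans hsnd₀.symm)
      fun s t => (measure_prod_le_min_map π measurableSet_Ici measurableSet_Ici).trans_eq
        (by rw [hfst, hsnd, quantileCoupling_Ici_prod_Ici])
  rw [lintegral_sq_sub_eq_of_map hfst hsnd hμ hν,
    lintegral_sq_sub_eq_of_map hfst₀ hsnd₀ hμ hν]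
  exact ENNReal.ofReal_le_ofReal (by linarith)

lemma eLpNorm_sub_eq_lintegral_map {α : Type*} [MeasurableSpace α] {m : Measure α}
    {f g : α → ℝ} (hf : AEMeasurable f m) (hg : AEMeasurable g m) :
    eLpNorm (fun a => f a - g a) 2 m =
      (∫⁻ p, ENNReal.ofReal ((p.1 - p.2) ^ 2) ∂m.map fun a => (f a, g a)) ^ (1 / 2 : ℝ) := by
  rw [eLpNorm_eq_lintegral_rpow_enorm_toReal two_ne_zero ENNReal.ofNat_ne_top,
    lintegral_map' (by fun_prop) (hf.prodMk hg)]
  simp [← ENNReal.ofReal_pow, Real.enorm_eq_ofReal_abs]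

/-- For probability measures `μ, ν` on `ℝ` with finite second moments and an atom-free
reference probability measure `ρ`, the `L²(ρ)` distance between the CDTs `μ̂` and `ν̂`
equals the Wasserstein-2 distance `W₂(μ,ν)`. -/
theorem cdt_dist_eq_wasserstein
    (μ ν : Measure ℝ) [IsProbabilityMeasure μ] [IsProbabilityMeasure ν]
    (hμ : MemLp (id : ℝ → ℝ) 2 μ) (hν : MemLp (id : ℝ → ℝ) 2 ν)
    (ρ : Measure ℝ) [IsProbabilityMeasure ρ] [NullSingletonClass ρ] :
    eLpNorm (fun t => cdt μ ρ t - cdt ν ρ t) 2 ρ = (W2sq μ ν) ^ (1/2 : ℝ) := by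
  calc eLpNorm (fun t => cdt μ ρ t - cdt ν ρ t) 2 ρ
      = eLpNorm (fun u => quantile μ u - quantile ν u) 2 𝕌 := by
        rw [← map_cdf ρ, eLpNorm_map_measure _ (monotone_cdf ρ).measurable.aemeasurable]
        · rfl
        · rw [map_cdf ρ]
          exact ((aemeasurable_quantile μ).sub (aemeasurable_quantile ν)).aestronglyMeasurable
    _ = W2sq μ ν ^ (1 / 2 : ℝ) := by
        rw [eLpNorm_sub_eq_lintegral_map (aemeasurable_quantile μ) (aemeasurable_quantile ν),
          W2sq_eq_lintegral_quantileCoupling μ ν hμ hν, quantileCoupling]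

end
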